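/- Fix integers n,m ≥ 1 and q ≥ 2, and fix a γ-imperfect shuffler used in the m-message n-player split-and-mix protocol P = P_{m,n} over Z_q. Let (X, X') be drawn uniformly at random from all pairs of vectors in (Z_q)^n having the same coordinate sum. Then E_{X,X'}[TVD(P(X), P(X'))] ≤ sqrt( q^{mn−1}·Pr[R(X) = S^{-1}·S'·R'(X)] − 1 ), where R, R' are independent split randomizers, S, S' are independent draws of the m shuffling permutations, and S^{-1}·S'·M denotes applying the permutations of S' followed by the inverses of the permutations of S to the columns of the message matrix M. -/

import Mathlib

open Finset

/-- The swap distance between two permutations. -/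
noncomputable def swapDist {n : ℕ} (π π' : Equiv.Perm (Fin n)) : ℕ :=
  sInf {t | ∃ l : List (Equiv.Perm (Fin n)),
    (∀ τ ∈ l, τ.IsSwap) ∧ l.length = t ∧ π' = π * l.prod}

/-- A shuffler on `n` elements: a probability mass function on permutations of `Fin n`. -/
def IsShuffler {n : ℕ} (S : Equiv.Perm (Fin n) → ℝ) : Prop :=
  (∀ π, 0 ≤ S π) ∧ ∑ π : Equiv.Perm (Fin n), S π = 1

/-- A `γ`-imperfect shuffler. -/
def IsImperfectShuffler {n : ℕ} (γ : ℝ) (S : Equiv.Perm (Fin n) → ℝ) : Prop :=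
  IsShuffler S ∧
    ∀ π π' : Equiv.Perm (Fin n),
      S π ≤ Real.exp (γ * (swapDist π π' : ℝ)) * S π'

/-- An `n × m` message matrix is valid for the input `x` if the `i`-th row sums to `x i`. -/
def validMat {n m q : ℕ} (x : Fin n → ZMod q) (A : Fin n → Fin m → ZMod q) : Prop :=
  ∀ i, ∑ j, A i j = x i

/-- Permute, for each `j`, the `j`-th messages of the `n` players according to `πs j`. -/
def applyShuffle {n m q : ℕ} (πs : Fin m → Equiv.Perm (Fin n))
    (A : Fin n → Fin m → ZMod q) : Fin n → Fin m → ZMod q :=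
  fun i j => A ((πs j)⁻¹ i) j

/-- The output distribution of the `m`-message `n`-player split-and-mix protocol on input
`x`, where the `m` shuffling permutations are drawn independently from the shuffler `S1`. -/
noncomputable def protOutInd {n q : ℕ} (m : ℕ) (S1 : Equiv.Perm (Fin n) → ℝ)
    (x : Fin n → ZMod q) (B : Fin n → Fin m → ZMod q) : ℝ :=
  ∑ πs : Fin m → Equiv.Perm (Fin n),
    (∏ k, S1 (πs k)) *
      ((Nat.card {A : Fin n → Fin m → ZMod q //
          validMat x A ∧ applyShuffle πs A = B} : ℝ) /
        (Nat.card {A : Fin n → Fin m → ZMod q // validMat x A} : ℝ))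

/-- Total variation distance between two probability mass functions on message matrices. -/
noncomputable def tvdMat {n m q : ℕ} [NeZero q]
    (μ ν : (Fin n → Fin m → ZMod q) → ℝ) : ℝ :=
  2⁻¹ * ∑ B : Fin n → Fin m → ZMod q, |μ B - ν B|

/-- The set of pairs of input vectors in `(Z_q)^n` with equal coordinate sums. -/
def eqSumPairs (n q : ℕ) [NeZero q] :
    Finset ((Fin n → ZMod q) × (Fin n → ZMod q)) :=
  Finset.univ.filter (fun p => ∑ i, p.1 i = ∑ i, p.2 i)

/-- `Pr[R(x) = S⁻¹ · S' · R'(x)]` for a fixed input `x`, where `S, S'` are independent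
tuples of `m` permutations drawn independently from `S1`, and `R, R'` are independent
split randomizers. -/
noncomputable def unshuffledCollision {n q : ℕ} (m : ℕ) (S1 : Equiv.Perm (Fin n) → ℝ)
    (x : Fin n → ZMod q) : ℝ :=
  ∑ πs : Fin m → Equiv.Perm (Fin n), ∑ πs' : Fin m → Equiv.Perm (Fin n),
    (∏ k, S1 (πs k)) * (∏ k, S1 (πs' k)) *
      ((Nat.card {p : (Fin n → Fin m → ZMod q) × (Fin n → Fin m → ZMod q) //
          validMat x p.1 ∧ validMat x p.2 ∧
            p.1 = applyShuffle (fun k => (πs k)⁻¹ * πs' k) p.2} : ℝ) /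
        ((Nat.card {A : Fin n → Fin m → ZMod q // validMat x A} : ℝ)) ^ 2)

/-! `P_x`, the output distribution on input `x`, is supported on the `q^(mn-1)` message matrices
whose entries sum to `∑ x`, so by Cauchy–Schwarz `TVD(P_x, P_x')² ≤ q^(mn-1)/4 · ‖P_x - P_x'‖²`
for inputs with equal sums. Expanding the square, `‖P_x‖²` is the unshuffled collision
probability of `x`. Averaged over equal-sum pairs, the cross term `⟨P_x, P_x'⟩` only involves
`∑_{∑ x = s} P_x`, which is uniform on the matrices of total sum `s` because shuffling preserves
total sums; hence it contributes exactly `q^(1-mn)`. A last Cauchy–Schwarz over the pairs bounds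
the mean TVD by its root mean square. -/

theorem AddMonoidHom.card_fiber_mul_card_eq {G M : Type*} [AddGroup G] [Fintype G] [AddMonoid M]
    [Fintype M] [DecidableEq M] (f : G →+ M) (hf : Function.Surjective f) (c : M) :
    #{g | f g = c} * Fintype.card M = Fintype.card G := by
  have hfib (c' : M) : #{g | f g = c'} = #{g | f g = c} :=
    AddMonoidHom.card_fiber_eq_of_mem_range f (hf c') (hf c)
  calc #{g | f g = c} * Fintype.card M = ∑ c' : M, #{g | f g = c'} := by
        simp [hfib, mul_comm]
    _ = Fintype.card G := (card_eq_sum_card_fiberwise fun g _ => mem_univ (f g)).symm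

theorem card_filter_sum_eq {q : ℕ} [NeZero q] {ι : Type*} [Fintype ι] [DecidableEq ι]
    [Nonempty ι] (c : ZMod q) : #{f : ι → ZMod q | ∑ i, f i = c} = q ^ (Fintype.card ι - 1) := by
  let sumHom : (ι → ZMod q) →+ ZMod q :=
    { toFun := fun f => ∑ i, f i, map_zero' := by simp, map_add' := by simp [sum_add_distrib] }
  obtain ⟨i₀⟩ := ‹Nonempty ι›
  have hsurj : Function.Surjective sumHom := fun c' => ⟨Pi.single i₀ c', by simp [sumHom]⟩
  have h := sumHom.card_fiber_mul_card_eq hsurj c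
  rw [ZMod.card, Fintype.card_fun, ZMod.card, ← pow_sub_one_mul Fintype.card_ne_zero] at h
  exact Nat.eq_of_mul_eq_mul_right (NeZero.pos q) h

theorem card_filter_sum_sum_eq {q : ℕ} [NeZero q] {ι κ : Type*} [Fintype ι] [DecidableEq ι]
    [Nonempty ι] [Fintype κ] [DecidableEq κ] [Nonempty κ] (c : ZMod q) :
    #{B : ι → κ → ZMod q | ∑ i, ∑ j, B i j = c} = q ^ (Fintype.card ι * Fintype.card κ - 1) := by
  rw [← Fintype.card_prod, ← card_filter_sum_eq c]
  exact Finset.card_equiv (Equiv.curry ι κ (ZMod q)).symm fun B => by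
    simp [Fintype.sum_prod_type]

theorem sub_one_add_mul_sub_one {m n : ℕ} (hn : 1 ≤ n) (hm : 1 ≤ m) :
    n - 1 + n * (m - 1) = m * n - 1 := by
  obtain ⟨n, rfl⟩ := Nat.exists_eq_add_of_le' hn
  obtain ⟨m, rfl⟩ := Nat.exists_eq_add_of_le' hm
  simp only [Nat.add_sub_cancel]
  ring_nf
  omega

theorem sq_sum_abs_le_card_mul_sum_sq {α : Type*} [Fintype α] (t : Finset α) {f : α → ℝ}
    (hf : ∀ a ∉ t, f a = 0) : (∑ a, |f a|) ^ 2 ≤ #t * ∑ a, f a ^ 2 := by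
  have hsupp : ∑ a ∈ t, |f a| = ∑ a, |f a| :=
    sum_subset (subset_univ t) fun a _ ha => by rw [hf a ha, abs_zero]
  calc (∑ a, |f a|) ^ 2 = (∑ a ∈ t, |f a|) ^ 2 := by rw [hsupp]
    _ ≤ #t * ∑ a ∈ t, |f a| ^ 2 := sq_sum_le_card_mul_sum_sq
    _ ≤ #t * ∑ a, f a ^ 2 := by
      simp_rw [sq_abs]
      exact mul_le_mul_of_nonneg_left
        (sum_le_sum_of_subset_of_nonneg (subset_univ t) fun a _ _ => sq_nonneg (f a))
        (Nat.cast_nonneg _)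

theorem sum_div_card_le_sqrt {ι : Type*} (s : Finset ι) (a : ι → ℝ) {y : ℝ}
    (h : ∑ i ∈ s, a i ^ 2 ≤ #s * y) : (∑ i ∈ s, a i) / #s ≤ √y := by
  rcases s.eq_empty_or_nonempty with rfl | hs
  · simp [Real.sqrt_nonneg]
  refine (le_abs_self _).trans (Real.abs_le_sqrt ?_)
  have hcard : (0 : ℝ) < #s := by exact_mod_cast hs.card_pos
  rw [div_pow, div_le_iff₀ (by positivity)]
  calc (∑ i ∈ s, a i) ^ 2 ≤ #s * ∑ i ∈ s, a i ^ 2 := sq_sum_le_card_mul_sum_sq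
    _ ≤ #s * (#s * y) := by gcongr
    _ = y * #s ^ 2 := by ring

theorem sum_filter_fst_eq_snd_fiberwise {α β M : Type*} [Fintype α] [Fintype β] [DecidableEq β]
    [AddCommMonoid M] (g : α → β) (f : α × α → M) :
    ∑ p ∈ univ.filter (fun p : α × α => g p.1 = g p.2), f p
      = ∑ b, ∑ x ∈ univ.filter (g · = b), ∑ x' ∈ univ.filter (g · = b), f (x, x') := by
  rw [← sum_fiberwise_of_maps_to (g := fun p : α × α => g p.1) (t := univ)
    fun _ _ => mem_univ _]
  refine sum_congr rfl fun b _ => ?_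
  rw [← sum_product]
  congr 1
  ext ⟨x, x'⟩
  simp only [mem_filter, mem_univ, true_and, mem_product]
  constructor
  · rintro ⟨hxx', rfl⟩; exact ⟨rfl, hxx'.symm⟩
  · rintro ⟨rfl, hx'⟩; exact ⟨hx'.symm, rfl⟩

section SplitAndMix

variable {n m q : ℕ}

theorem natCard_validMat [NeZero q] (hm : 1 ≤ m) (x : Fin n → ZMod q) :
    Nat.card {A : Fin n → Fin m → ZMod q // validMat x A} = q ^ (n * (m - 1)) := by
  have : Nonempty (Fin m) := ⟨⟨0, hm⟩⟩
  unfold validMat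
  rw [Nat.card_congr (Equiv.subtypePiEquivPi (p := fun i (v : Fin m → ZMod q) => ∑ j, v j = x i)),
    Nat.card_pi]
  simp_rw [Nat.card_eq_fintype_card, Fintype.card_subtype, card_filter_sum_eq, Fintype.card_fin]
  rw [prod_const, card_univ, Fintype.card_fin, ← pow_mul, mul_comm]

instance (x : Fin n → ZMod q) : DecidablePred (validMat (m := m) x) :=
  fun _ => inferInstanceAs (Decidable (∀ _, _))

theorem sum_eq_sum_sum_of_validMat {x : Fin n → ZMod q} {A : Fin n → Fin m → ZMod q}
    (hA : validMat x A) : ∑ i, x i = ∑ i, ∑ j, A i j :=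
  sum_congr rfl fun i _ => (hA i).symm

theorem sum_filter_sum_eq_ite_validMat [NeZero q] (s : ZMod q) (A : Fin n → Fin m → ZMod q) :
    ∑ x ∈ univ.filter (fun x : Fin n → ZMod q => ∑ i, x i = s),
      (if validMat x A then (1 : ℝ) else 0) = if ∑ i, ∑ j, A i j = s then 1 else 0 := by
  have hvalid (x : Fin n → ZMod q) : validMat x A ↔ (fun i => ∑ j, A i j) = x :=
    ⟨fun h => funext fun i => h i, fun h i => congrFun h i⟩
  simp_rw [hvalid, sum_ite_eq, mem_filter, mem_univ, true_and]

theorem applyShuffle_one (A : Fin n → Fin m → ZMod q) : applyShuffle 1 A = A := rfl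

theorem applyShuffle_applyShuffle (σ τ : Fin m → Equiv.Perm (Fin n))
    (A : Fin n → Fin m → ZMod q) :
    applyShuffle σ (applyShuffle τ A) = applyShuffle (σ * τ) A := by
  funext i j
  simp [applyShuffle, mul_inv_rev]

def shuffleEquiv (πs : Fin m → Equiv.Perm (Fin n)) :
    (Fin n → Fin m → ZMod q) ≃ (Fin n → Fin m → ZMod q) where
  toFun := applyShuffle πs
  invFun := applyShuffle πs⁻¹
  left_inv A := by rw [applyShuffle_applyShuffle, inv_mul_cancel, applyShuffle_one]
  right_inv A := by rw [applyShuffle_applyShuffle, mul_inv_cancel, applyShuffle_one]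

theorem sum_sum_applyShuffle (πs : Fin m → Equiv.Perm (Fin n)) (A : Fin n → Fin m → ZMod q) :
    ∑ i, ∑ j, applyShuffle πs A i j = ∑ i, ∑ j, A i j := by
  rw [sum_comm, sum_comm (f := A)]
  exact sum_congr rfl fun j _ => Equiv.sum_comp (πs j)⁻¹ (A · j)

theorem natCard_validMat_applyShuffle_eq [NeZero q] (πs : Fin m → Equiv.Perm (Fin n))
    (x : Fin n → ZMod q) (B : Fin n → Fin m → ZMod q) :
    Nat.card {A : Fin n → Fin m → ZMod q // validMat x A ∧ applyShuffle πs A = B}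
      = if validMat x (applyShuffle πs⁻¹ B) then 1 else 0 := by
  have hB (A : Fin n → Fin m → ZMod q) :
      validMat x A ∧ applyShuffle πs A = B ↔ A = applyShuffle πs⁻¹ B ∧ validMat x A := by
    rw [and_comm]
    exact and_congr_left' (shuffleEquiv πs).eq_symm_apply.symm
  simp_rw [hB, Nat.card_eq_fintype_card, Fintype.card_subtype, card_filter, ite_and, sum_ite_eq']
  simp

theorem protOutInd_eq_sum_ite [NeZero q] (hm : 1 ≤ m) (S1 : Equiv.Perm (Fin n) → ℝ)
    (x : Fin n → ZMod q) (B : Fin n → Fin m → ZMod q) :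
    protOutInd m S1 x B = (∑ πs : Fin m → Equiv.Perm (Fin n),
      (∏ k, S1 (πs k)) * if validMat x (applyShuffle πs⁻¹ B) then 1 else 0) /
        (q : ℝ) ^ (n * (m - 1)) := by
  simp_rw [protOutInd, natCard_validMat_applyShuffle_eq, natCard_validMat hm, sum_div,
    mul_div_assoc]
  push_cast
  rfl

theorem protOutInd_eq_zero_of_sum_ne [NeZero q] (hm : 1 ≤ m) (S1 : Equiv.Perm (Fin n) → ℝ)
    {x : Fin n → ZMod q} {B : Fin n → Fin m → ZMod q} (h : ∑ i, ∑ j, B i j ≠ ∑ i, x i) :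
    protOutInd m S1 x B = 0 := by
  rw [protOutInd_eq_sum_ite hm, sum_eq_zero, zero_div]
  intro πs _
  rw [if_neg, mul_zero]
  intro hvalid
  exact h (sum_sum_applyShuffle πs⁻¹ B ▸ (sum_eq_sum_sum_of_validMat hvalid).symm)

theorem sum_filter_protOutInd [NeZero q] (hm : 1 ≤ m) {S1 : Equiv.Perm (Fin n) → ℝ}
    (hS1 : IsShuffler S1) (s : ZMod q) (B : Fin n → Fin m → ZMod q) :
    ∑ x ∈ univ.filter (fun x : Fin n → ZMod q => ∑ i, x i = s), protOutInd m S1 x B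
      = (if ∑ i, ∑ j, B i j = s then 1 else 0) / (q : ℝ) ^ (n * (m - 1)) := by
  simp_rw [protOutInd_eq_sum_ite hm, ← sum_div]
  congr 1
  rw [sum_comm]
  simp_rw [← mul_sum, sum_filter_sum_eq_ite_validMat, sum_sum_applyShuffle, ← sum_mul,
    ← Fintype.prod_sum, hS1.2, prod_const_one, one_mul]

theorem natCard_unshuffledPairs [NeZero q] (πs πs' : Fin m → Equiv.Perm (Fin n))
    (x : Fin n → ZMod q) :
    (Nat.card {p : (Fin n → Fin m → ZMod q) × (Fin n → Fin m → ZMod q) //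
        validMat x p.1 ∧ validMat x p.2 ∧ p.1 = applyShuffle (fun k => (πs k)⁻¹ * πs' k) p.2} : ℝ)
      = ∑ B : Fin n → Fin m → ZMod q,
          (if validMat x (applyShuffle πs⁻¹ B) then 1 else 0) *
            (if validMat x (applyShuffle πs'⁻¹ B) then 1 else 0) := by
  rw [show (fun k => (πs k)⁻¹ * πs' k) = πs⁻¹ * πs' from rfl, Nat.card_eq_fintype_card,
    Fintype.card_subtype, card_filter, Fintype.sum_prod_type, sum_comm]
  -- a pair `(πs⁻¹ πs' A, A)` is counted on the right at `B = πs' A`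
  conv_rhs => rw [← (shuffleEquiv πs').sum_comp]
  push_cast
  refine sum_congr rfl fun A _ => ?_
  have hpair (A' : Fin n → Fin m → ZMod q) :
      (validMat x A' ∧ validMat x A ∧ A' = applyShuffle (πs⁻¹ * πs') A) ↔
        (A' = applyShuffle (πs⁻¹ * πs') A ∧ validMat x (applyShuffle (πs⁻¹ * πs') A) ∧
          validMat x A) := by
    constructor
    · rintro ⟨h₁, h₂, rfl⟩; exact ⟨rfl, h₁, h₂⟩
    · rintro ⟨rfl, h₁, h₂⟩; exact ⟨h₁, h₂, rfl⟩
  simp_rw [hpair, ite_and, sum_ite_eq', mem_univ, if_true]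
  simp [shuffleEquiv, applyShuffle_applyShuffle, applyShuffle_one, ← ite_and, and_comm]

theorem unshuffledCollision_eq_sum_sq [NeZero q] (hm : 1 ≤ m) (S1 : Equiv.Perm (Fin n) → ℝ)
    (x : Fin n → ZMod q) :
    unshuffledCollision m S1 x = ∑ B : Fin n → Fin m → ZMod q, protOutInd m S1 x B ^ 2 := by
  simp_rw [unshuffledCollision, natCard_unshuffledPairs, natCard_validMat hm,
    protOutInd_eq_sum_ite hm, div_pow, sq, sum_mul_sum, mul_div_assoc', mul_sum, sum_div]
  conv_rhs => rw [sum_comm]; enter [2, πs]; rw [sum_comm]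
  push_cast
  refine sum_congr rfl fun πs _ => sum_congr rfl fun πs' _ => sum_congr rfl fun B _ => ?_
  ring

theorem sq_tvdMat_le [NeZero q] (t : Finset (Fin n → Fin m → ZMod q))
    {μ ν : (Fin n → Fin m → ZMod q) → ℝ} (h : ∀ B ∉ t, μ B = ν B) :
    tvdMat μ ν ^ 2 ≤ #t / 4 * ∑ B, (μ B - ν B) ^ 2 := by
  have hCS := sq_sum_abs_le_card_mul_sum_sq t fun B hB => sub_eq_zero.mpr (h B hB)
  rw [tvdMat, mul_pow]
  linarith

theorem sq_tvdMat_protOutInd_le [NeZero q] (hn : 1 ≤ n) (hm : 1 ≤ m)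
    (S1 : Equiv.Perm (Fin n) → ℝ) {x x' : Fin n → ZMod q} (hx : ∑ i, x i = ∑ i, x' i) :
    tvdMat (protOutInd m S1 x) (protOutInd m S1 x') ^ 2
      ≤ (q : ℝ) ^ (m * n - 1) / 4 * ∑ B, (protOutInd m S1 x B - protOutInd m S1 x' B) ^ 2 := by
  have : Nonempty (Fin n) := ⟨⟨0, hn⟩⟩
  have : Nonempty (Fin m) := ⟨⟨0, hm⟩⟩
  have hcard := card_filter_sum_sum_eq (ι := Fin n) (κ := Fin m) (∑ i, x i)
  rw [Fintype.card_fin, Fintype.card_fin, mul_comm] at hcard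
  convert sq_tvdMat_le {B | ∑ i, ∑ j, B i j = ∑ i, x i} fun B hB => ?_
  · rw [hcard, Nat.cast_pow]
  · rw [mem_filter, not_and] at hB
    have hB' := hB (mem_univ B)
    rw [protOutInd_eq_zero_of_sum_ne hm S1 hB',
      protOutInd_eq_zero_of_sum_ne hm S1 (hx ▸ hB')]

theorem sum_eqSumPairs_swap [NeZero q] {M : Type*} [AddCommMonoid M]
    (f : (Fin n → ZMod q) × (Fin n → ZMod q) → M) :
    ∑ p ∈ eqSumPairs n q, f p.swap = ∑ p ∈ eqSumPairs n q, f p := by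
  simp_rw [eqSumPairs, sum_filter_fst_eq_snd_fiberwise (fun x : Fin n → ZMod q => ∑ i, x i),
    Prod.swap_prod_mk]
  exact sum_congr rfl fun _ _ => sum_comm

theorem card_eqSumPairs [NeZero q] (hn : 1 ≤ n) :
    #(eqSumPairs n q) = q * (q ^ (n - 1)) ^ 2 := by
  have : Nonempty (Fin n) := ⟨⟨0, hn⟩⟩
  rw [card_eq_sum_ones, eqSumPairs,
    sum_filter_fst_eq_snd_fiberwise (fun x : Fin n → ZMod q => ∑ i, x i)]
  simp only [sum_const, card_filter_sum_eq, Fintype.card_fin, card_univ, ZMod.card, smul_eq_mul,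
    mul_one, sq]

theorem sum_eqSumPairs_inner [NeZero q] (hn : 1 ≤ n) (hm : 1 ≤ m) {S1 : Equiv.Perm (Fin n) → ℝ}
    (hS1 : IsShuffler S1) :
    ∑ p ∈ eqSumPairs n q, ∑ B, protOutInd m S1 p.1 B * protOutInd m S1 p.2 B
      = #(eqSumPairs n q) / (q : ℝ) ^ (m * n - 1) := by
  have : Nonempty (Fin n) := ⟨⟨0, hn⟩⟩
  have : Nonempty (Fin m) := ⟨⟨0, hm⟩⟩
  have hfiber (b : ZMod q) :
      ∑ x ∈ univ.filter (fun x : Fin n → ZMod q => ∑ i, x i = b),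
        ∑ x' ∈ univ.filter (fun x : Fin n → ZMod q => ∑ i, x i = b),
          ∑ B, protOutInd m S1 x B * protOutInd m S1 x' B
        = (q : ℝ) ^ (m * n - 1) / ((q : ℝ) ^ (n * (m - 1))) ^ 2 := by
    calc _ = ∑ B, (∑ x ∈ univ.filter (fun x : Fin n → ZMod q => ∑ i, x i = b),
            protOutInd m S1 x B) *
          ∑ x' ∈ univ.filter (fun x : Fin n → ZMod q => ∑ i, x i = b), protOutInd m S1 x' B := by
          simp_rw [sum_mul_sum]
          conv_rhs => rw [sum_comm]; enter [2, x]; rw [sum_comm]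
      _ = ∑ B : Fin n → Fin m → ZMod q, (if ∑ i, ∑ j, B i j = b then (1 : ℝ) else 0) /
            ((q : ℝ) ^ (n * (m - 1))) ^ 2 := by
          simp_rw [sum_filter_protOutInd hm hS1]
          exact sum_congr rfl fun B _ => by split_ifs <;> ring
      _ = _ := by
          rw [← sum_div, sum_boole, card_filter_sum_sum_eq, Fintype.card_fin, Fintype.card_fin,
            mul_comm n m, Nat.cast_pow]
  rw [card_eqSumPairs hn, eqSumPairs,
    sum_filter_fst_eq_snd_fiberwise (fun x : Fin n → ZMod q => ∑ i, x i)]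
  simp_rw [hfiber, sum_const, card_univ, ZMod.card, nsmul_eq_mul,
    ← sub_one_add_mul_sub_one hn hm, pow_add]
  have : (q : ℝ) ≠ 0 := NeZero.ne _
  field_simp
  push_cast
  ring

theorem sum_eqSumPairs_sq_dist [NeZero q] (hn : 1 ≤ n) (hm : 1 ≤ m)
    {S1 : Equiv.Perm (Fin n) → ℝ} (hS1 : IsShuffler S1) :
    ∑ p ∈ eqSumPairs n q, ∑ B, (protOutInd m S1 p.1 B - protOutInd m S1 p.2 B) ^ 2
      = 2 * ∑ p ∈ eqSumPairs n q, ∑ B, protOutInd m S1 p.1 B ^ 2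
        - 2 * (#(eqSumPairs n q) / (q : ℝ) ^ (m * n - 1)) := by
  have hexpand (p : (Fin n → ZMod q) × (Fin n → ZMod q)) :
      ∑ B, (protOutInd m S1 p.1 B - protOutInd m S1 p.2 B) ^ 2
        = ∑ B, protOutInd m S1 p.1 B ^ 2 + ∑ B, protOutInd m S1 p.2 B ^ 2
          - 2 * ∑ B, protOutInd m S1 p.1 B * protOutInd m S1 p.2 B := by
    rw [mul_sum, ← sum_add_distrib, ← sum_sub_distrib]
    exact sum_congr rfl fun _ _ => by ring
  have hswap := sum_eqSumPairs_swap (n := n) (q := q) fun p => ∑ B, protOutInd m S1 p.1 B ^ 2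
  simp only [Prod.fst_swap] at hswap
  simp_rw [hexpand, sum_sub_distrib, sum_add_distrib, ← mul_sum, hswap,
    sum_eqSumPairs_inner hn hm hS1]
  ring

end SplitAndMix

theorem avg_tvd_le_sqrt_unshuffled_general {n m q : ℕ} [NeZero q] (hn : 1 ≤ n) (hm : 1 ≤ m) (γ : ℝ)
    (S1 : Equiv.Perm (Fin n) → ℝ) (hS1 : IsImperfectShuffler γ S1) :
    (∑ p ∈ eqSumPairs n q, tvdMat (protOutInd m S1 p.1) (protOutInd m S1 p.2)) /
        ((eqSumPairs n q).card : ℝ)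
      ≤ Real.sqrt ((q : ℝ) ^ (m * n - 1) *
          ((∑ p ∈ eqSumPairs n q, unshuffledCollision m S1 p.1) /
            ((eqSumPairs n q).card : ℝ)) - 1) := by
  have hK : (0 : ℝ) < (q : ℝ) ^ (m * n - 1) := pow_pos (mod_cast NeZero.pos q) _
  have hN : (0 : ℝ) < #(eqSumPairs n q) :=
    Nat.cast_pos.mpr (card_pos.mpr ⟨(0, 0), by simp [eqSumPairs]⟩)
  have hsq : ∑ p ∈ eqSumPairs n q, tvdMat (protOutInd m S1 p.1) (protOutInd m S1 p.2) ^ 2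
      ≤ (q : ℝ) ^ (m * n - 1) / 4 * (2 * ∑ p ∈ eqSumPairs n q, ∑ B, protOutInd m S1 p.1 B ^ 2
        - 2 * (#(eqSumPairs n q) / (q : ℝ) ^ (m * n - 1))) := by
    rw [← sum_eqSumPairs_sq_dist hn hm hS1.1, mul_sum]
    exact sum_le_sum fun p hp => sq_tvdMat_protOutInd_le hn hm S1 (mem_filter.mp hp).2
  have hsq_nonneg := sum_nonneg fun p (_ : p ∈ eqSumPairs n q) =>
    sq_nonneg (tvdMat (protOutInd m S1 p.1) (protOutInd m S1 p.2))
  refine sum_div_card_le_sqrt _ _ (hsq.trans ?_)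
  simp_rw [unshuffledCollision_eq_sum_sq hm S1]
  generalize (q : ℝ) ^ (m * n - 1) = K at *
  generalize ∑ p ∈ eqSumPairs n q, ∑ B, protOutInd m S1 p.1 B ^ 2 = C at *
  generalize ((eqSumPairs n q).card : ℝ) = N at *
  have hlhs : K / 4 * (2 * C - 2 * (N / K)) = (K * C - N) / 2 := by field_simp; ring
  have hrhs : N * (K * (C / N) - 1) = K * C - N := by field_simp
  rw [hlhs] at hsq ⊢
  rw [hrhs]
  linarith

/-- for the split-and-mix protocol with a `γ`-imperfect shuffler, with
`(X, X')` uniform over pairs of equal-sum inputs,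
`E[TVD(P(X), P(X'))] ≤ sqrt(q^{mn-1}·Pr[R(X) = S⁻¹·S'·R'(X)] - 1)`. -/
theorem avg_tvd_le_sqrt_unshuffled {n m q : ℕ} [NeZero q] (hn : 1 ≤ n) (hm : 1 ≤ m)
    (hq : 2 ≤ q) (γ : ℝ) (hγ : 0 ≤ γ)
    (S1 : Equiv.Perm (Fin n) → ℝ) (hS1 : IsImperfectShuffler γ S1) :
    (∑ p ∈ eqSumPairs n q, tvdMat (protOutInd m S1 p.1) (protOutInd m S1 p.2)) /
        ((eqSumPairs n q).card : ℝ)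
      ≤ Real.sqrt ((q : ℝ) ^ (m * n - 1) *
          ((∑ p ∈ eqSumPairs n q, unshuffledCollision m S1 p.1) /
            ((eqSumPairs n q).card : ℝ)) - 1) :=
  avg_tvd_le_sqrt_unshuffled_general hn hm γ S1 hS1
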